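/- arXiv:2110.10530 — 4 statements merged into one kernel-verified Lean document; each statement's English description precedes it below -/
import Mathlib

section
/- For any connected graph G on n vertices, the burning number of G satisfies b(G) ≤ ⌈√(2n)⌉. -/
open SimpleGraph

/-- A graph is `k`-burnable if there is a sequence of `k` vertices `v 0, …, v (k-1)`
(`v i` being set on fire at step `i+1`) whose closed balls of radii `k-1-i` cover the graph. -/
def Burnable {V : Type*} (G : SimpleGraph V) (k : ℕ) : Prop :=
  ∃ v : Fin k → V, ∀ u : V, ∃ i : Fin k,
    G.Reachable (v i) u ∧ G.dist (v i) u ≤ k - 1 - (i : ℕ)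

/-- The burning number of a graph: the least `k` such that `G` is `k`-burnable. -/
noncomputable def burningNumber {V : Type*} (G : SimpleGraph V) : ℕ :=
  sInf {k | Burnable G k}

section Aux

variable {V : Type*} [Fintype V] [DecidableEq V] {G : SimpleGraph V}

/-- Chain lemma: iterating the parent map `m` times controls the distance. -/
lemma burn_chain (hG : G.Connected) (x : V) (p : V → V)
    (hp : ∀ v, v ≠ x → G.Adj (p v) v ∧ G.dist x (p v) + 1 = G.dist x v)
    (hpx : p x = x) {y : V} (hy : y ≠ x) :
    ∀ m : ℕ, ∀ v : V, p^[m] v = y →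
      G.dist y v ≤ m ∧ G.dist x v = m + G.dist x y := by
  intro m
  induction m with
  | zero =>
    intro v h
    simp only [Function.iterate_zero, id] at h
    subst h
    simp [SimpleGraph.dist_self]
  | succ m ih =>
    intro v h
    have hvx : v ≠ x := by
      rintro rfl
      rw [Function.iterate_fixed hpx] at h
      exact hy h.symm
    rw [Function.iterate_succ_apply] at h
    obtain ⟨h1, h2⟩ := ih (p v) h
    obtain ⟨hadj, hdist⟩ := hp v hvx
    constructor
    · calc G.dist y v ≤ G.dist y (p v) + G.dist (p v) v := hG.dist_triangle
      _ ≤ m + 1 := by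
          have : G.dist (p v) v ≤ 1 := by
            have := SimpleGraph.dist_le (SimpleGraph.Walk.cons hadj SimpleGraph.Walk.nil)
            simpa using this
          omega
    · omega

/-- Main covering lemma: any parent-closed set of size at most `k(k+1)/2` can be
covered by `k` balls of radii `k-1, …, 0`. -/
lemma burn_cover (hG : G.Connected) (x : V) (p : V → V)
    (hp : ∀ v, v ≠ x → G.Adj (p v) v ∧ G.dist x (p v) + 1 = G.dist x v)
    (hpx : p x = x) :
    ∀ k : ℕ, ∀ A : Finset V, (∀ v ∈ A, p v ∈ A) → 2 * A.card ≤ k * (k + 1) →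
      ∃ c : Fin k → V, ∀ u ∈ A, ∃ i : Fin k, G.dist (c i) u ≤ k - 1 - (i : ℕ) := by
  intro k
  induction k with
  | zero =>
    intro A _ hcard
    have : A = ∅ := by
      simpa using Finset.card_eq_zero.mp (by omega)
    refine ⟨fun i => i.elim0, ?_⟩
    simp [this]
  | succ k ih =>
    intro A hclosed hcard
    rcases A.eq_empty_or_nonempty with rfl | hA
    · exact ⟨fun _ => x, by simp⟩
    classical
    -- D = max distance from x over A
    obtain ⟨z, hzA, hz⟩ := A.exists_max_image (fun v => G.dist x v) hA
    by_cases hD : G.dist x z ≤ k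
    · -- everything within distance k of x : burn x
      refine ⟨fun _ => x, fun u hu => ⟨0, ?_⟩⟩
      have := hz u hu
      simpa using le_trans this hD
    · push_neg at hD
      set D := G.dist x z with hDdef
      -- the ancestor k steps above z
      set y := p^[k] z with hy
      -- distance from x decreases by one each parent step along the chain from z
      have chain_dist : ∀ j : ℕ, j ≤ k → G.dist x (p^[j] z) = D - j := by
        intro j hj
        induction j with
        | zero => simp [hDdef]
        | succ j ihj =>
          have hj' : j ≤ k := by omega
          have hprev := ihj hj'
          have hne : p^[j] z ≠ x := by
            intro hxx
            rw [hxx] at hprev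
            simp [SimpleGraph.dist_self] at hprev
            omega
          have := (hp _ hne).2
          rw [Function.iterate_succ_apply']
          omega
      have hyA : ∀ j : ℕ, j ≤ k → p^[j] z ∈ A := by
        intro j hj
        induction j with
        | zero => simpa using hzA
        | succ j ihj =>
          rw [Function.iterate_succ_apply']
          exact hclosed _ (ihj (by omega))
      have hydist : G.dist x y = D - k := chain_dist k le_rfl
      have hyne : y ≠ x := by
        intro hxx
        rw [hxx] at hydist
        simp [SimpleGraph.dist_self] at hydist
        omega
      -- the descendants of y
      set Desc : Finset V := A.filter (fun v => ∃ m : ℕ, p^[m] v = y) with hDesc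
      have hchain_mem : ∀ j : ℕ, j ≤ k → p^[j] z ∈ Desc := by
        intro j hj
        rw [hDesc, Finset.mem_filter]
        refine ⟨hyA j hj, ⟨k - j, ?_⟩⟩
        rw [← Function.iterate_add_apply]
        rw [hy]
        congr 1
        omega
      -- Desc has at least k+1 elements
      have hDesc_card : k + 1 ≤ Desc.card := by
        have hinj : Set.InjOn (fun j : Fin (k+1) => p^[(j:ℕ)] z) ↑(Finset.univ : Finset (Fin (k+1))) := by
          intro a _ b _ hab
          have ha := chain_dist a (by omega)
          have hb := chain_dist b (by omega)
          simp only at hab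
          rw [hab] at ha
          have : (a : ℕ) = (b : ℕ) := by omega
          exact Fin.ext this
        have := Finset.card_le_card_of_injOn (fun j : Fin (k+1) => p^[(j:ℕ)] z)
          (fun j _ => hchain_mem j (by omega)) hinj
        simpa using this
      -- remove the descendants and recurse
      set A' := A.filter (fun v => ¬ ∃ m : ℕ, p^[m] v = y) with hA'
      have hsplit : A'.card + Desc.card = A.card := by
        rw [hA', hDesc]
        have := Finset.card_filter_add_card_filter_not
          (s := A) (p := fun v => ∃ m : ℕ, p^[m] v = y)
        omega
      have hA'closed : ∀ v ∈ A', p v ∈ A' := by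
        intro v hv
        rw [hA', Finset.mem_filter] at hv ⊢
        refine ⟨hclosed _ hv.1, ?_⟩
        rintro ⟨m, hm⟩
        exact hv.2 ⟨m + 1, by rw [Function.iterate_succ_apply]; exact hm⟩
      have hA'card : 2 * A'.card ≤ k * (k + 1) := by
        have h1 : 2 * A.card ≤ (k + 1) * (k + 1 + 1) := hcard
        have h2 : (k + 1) * (k + 1 + 1) = k * (k + 1) + 2 * (k + 1) := by ring
        omega
      obtain ⟨c', hc'⟩ := ih A' hA'closed hA'card
      refine ⟨Fin.cons y (fun i => c' i), fun u hu => ?_⟩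
      by_cases hdesc : ∃ m : ℕ, p^[m] u = y
      · obtain ⟨m, hm⟩ := hdesc
        obtain ⟨h1, h2⟩ := burn_chain hG x p hp hpx hyne m u hm
        refine ⟨0, ?_⟩
        have hud : G.dist x u ≤ D := hz u hu
        have hmk : m ≤ k := by omega
        simpa using le_trans h1 (by omega)
      · have hu' : u ∈ A' := by
          rw [hA', Finset.mem_filter]
          exact ⟨hu, hdesc⟩
        obtain ⟨i, hi⟩ := hc' u hu'
        refine ⟨i.succ, ?_⟩
        have : (Fin.cons y (fun i => c' i) : Fin (k+1) → V) i.succ = c' i := by simp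
        rw [this]
        have : ((i.succ : Fin (k+1)) : ℕ) = (i : ℕ) + 1 := by simp
        rw [this]
        have : k + 1 - 1 - ((i : ℕ) + 1) = k - 1 - (i : ℕ) := by omega
        rw [this]
        exact hi

end Aux

theorem burning_sqrt_two {V : Type*} [Fintype V] (G : SimpleGraph V)
    (hG : G.Connected) :
    burningNumber G ≤ ⌈Real.sqrt (2 * Fintype.card V)⌉₊ := by
  classical
  set k := ⌈Real.sqrt (2 * Fintype.card V)⌉₊ with hk
  -- 2n ≤ k²
  have hn : 2 * Fintype.card V ≤ k * k := by
    have h1 : Real.sqrt (2 * Fintype.card V) ≤ (k : ℝ) := Nat.le_ceil _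
    have h2 : (2 * Fintype.card V : ℝ) ≤ (k : ℝ) * (k : ℝ) := by
      have h0 : (0:ℝ) ≤ 2 * Fintype.card V := by positivity
      have := Real.sq_sqrt h0
      nlinarith [Real.sqrt_nonneg (2 * Fintype.card V : ℝ)]
    exact_mod_cast h2
  -- root and parent map
  have hne : Nonempty V := hG.nonempty
  obtain ⟨x⟩ := hne
  have hpar : ∀ v : V, v ≠ x → ∃ w : V, G.Adj w v ∧ G.dist x w + 1 = G.dist x v := by
    intro v hv
    obtain ⟨q, hq⟩ := hG.exists_walk_length_eq_dist v x
    cases q with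
    | nil => exact absurd rfl hv
    | cons h q' =>
      rename_i w
      refine ⟨w, h.symm, ?_⟩
      have h1 : G.dist x w ≤ q'.length := by
        have := SimpleGraph.dist_le q'
        rwa [SimpleGraph.dist_comm] at this
      have h2 : G.dist x v ≤ G.dist x w + 1 := by
        have hwv : G.dist w v ≤ 1 := by
          simpa using SimpleGraph.dist_le (SimpleGraph.Walk.cons h.symm SimpleGraph.Walk.nil)
        calc G.dist x v ≤ G.dist x w + G.dist w v := hG.dist_triangle
        _ ≤ G.dist x w + 1 := Nat.add_le_add_left hwv _
      have h3 : q'.length + 1 = G.dist x v := by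
        simp only [SimpleGraph.Walk.length_cons] at hq
        rw [SimpleGraph.dist_comm]; omega
      omega
  -- build the parent function
  let p : V → V := fun v => if h : v = x then x else Classical.choose (hpar v h)
  have hp : ∀ v, v ≠ x → G.Adj (p v) v ∧ G.dist x (p v) + 1 = G.dist x v := by
    intro v hv
    simp only [p, dif_neg hv]
    exact Classical.choose_spec (hpar v hv)
  have hpx : p x = x := by simp [p]
  obtain ⟨c, hc⟩ := burn_cover hG x p hp hpx k Finset.univ (fun v _ => Finset.mem_univ _)
    (by simpa using Nat.le_trans hn (Nat.mul_le_mul_left k (Nat.le_succ k)))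
  have hburn : Burnable G k := by
    refine ⟨c, fun u => ?_⟩
    obtain ⟨i, hi⟩ := hc u (Finset.mem_univ u)
    exact ⟨i, hG.preconnected _ _, hi⟩
  exact Nat.sInf_le hburn
end

section
/- Let T be a tree and let P be a path in T with endpoints u and v. Let T_1 (respectively T_2) be the connected component containing u (respectively v) of the graph obtained from T by removing the internal vertices of P (i.e. removing P ∖ {u, v}), and let T' be the graph obtained from the disjoint union of T_1 and T_2 by adding the edge uv. If b(T') = p and d_T(u,v) + 2·max{ d_T(x, P) : x ∈ V(T), x ∉ V(T_1) ∪ V(T_2) } ≤ 2p + 2 (where d_T(x, P) is the minimum distance in T from x to a vertex of P), then b(T) ≤ p + 1. -/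
open SimpleGraph

/-- The graph obtained from `T` by deleting the vertices in `I`
(vertices of `I` become isolated). -/
def deleteVerts {V : Type*} (T : SimpleGraph V) (I : Set V) : SimpleGraph V :=
  SimpleGraph.fromRel (fun a b => T.Adj a b ∧ a ∉ I ∧ b ∉ I)

/-!
Take a burning sequence of `T'` of length `p`. One side of `T'`, say the component of `v`, is
burnt entirely by sources lying on that side: otherwise the two sources that burn across the
bridge `uv` would each also reach the other's target. Distances within a side are the same in
`T` and `T'`, so in `T` the same sources still burn everything except the vertices near `u`
that were burnt across the bridge, which lie within the reach `ρ` of the best source beyond `v`,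
and the vertices outside `T₁ ∪ T₂`, which lie within `M` (the maximum in the hypothesis) of an
interior vertex of `P`. A single new source, lit first on `P` at distance
`min d(u,v) (p + 1 - max ρ M)` from `u`, burns those of them that this best source does not;
`d(u,v) + 2M ≤ 2p + 2` is exactly what this needs. When `P` has length at most one, `T'` is
`T` itself.
-/

section Graph

variable {V W : Type*} {G : SimpleGraph V} {u v : V}

lemma SimpleGraph.Walk.dist_getVert_le (p : G.Walk u v) {i j : ℕ} (hij : i ≤ j) :
    G.dist (p.getVert i) (p.getVert j) ≤ j - i := by
  have h := G.dist_le ((p.drop i).take (j - i))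
  rw [Walk.take_length, Walk.drop_getVert, Nat.add_sub_cancel' hij] at h
  omega

lemma SimpleGraph.IsAcyclic.length_eq_dist (hG : G.IsAcyclic) {p : G.Walk u v} (hp : p.IsPath) :
    p.length = G.dist u v := by
  obtain ⟨q, hq, hlen⟩ := p.reachable.exists_path_of_dist
  obtain rfl : p = q := congrArg Subtype.val ((hG.subsingleton_path u v).elim ⟨p, hp⟩ ⟨q, hq⟩)
  exact hlen

lemma SimpleGraph.Reachable.dist_map_le {H : SimpleGraph W} (f : G →g H) {a b : V}
    (h : G.Reachable a b) : H.dist (f a) (f b) ≤ G.dist a b := by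
  obtain ⟨p, hp⟩ := h.exists_walk_length_eq_dist
  exact hp ▸ (p.length_map f) ▸ H.dist_le (p.map f)

lemma SimpleGraph.Reachable.le_add_dist {f : V → ℕ} (hf : ∀ a b, G.Adj a b → f b ≤ f a + 1)
    {a b : V} (h : G.Reachable a b) : f b ≤ f a + G.dist a b := by
  have key {a b : V} (p : G.Walk a b) : f b ≤ f a + p.length := by
    induction p with
    | nil => simp
    | cons hadj _ ih =>
      have := hf _ _ hadj
      rw [Walk.length_cons]
      omega
  obtain ⟨p, hp⟩ := h.exists_walk_length_eq_dist
  exact hp ▸ key p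

lemma SimpleGraph.Walk.exists_center (hG : G.Connected) (P : G.Walk u v) {ρ M p : ℕ}
    (hρ : ρ ≤ p) (hM : P.length + 2 * M ≤ 2 * p + 2) :
    ∃ c, ∀ x, (G.dist u x < ρ → G.dist c x ≤ p) ∧
      ∀ y ∈ P.support, y ≠ u → y ≠ v → G.dist y x ≤ M → G.dist c x ≤ p ∨ G.dist v x ≤ ρ := by
  set a := min P.length (p + 1 - max ρ M)
  refine ⟨P.getVert a, fun x => ⟨fun hx => ?_, fun y hy hyu hyv hyx => ?_⟩⟩
  · have := hG.dist_triangle (u := P.getVert a) (v := u) (w := x)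
    have := P.dist_getVert_le (Nat.zero_le a)
    rw [P.getVert_zero, SimpleGraph.dist_comm] at this
    omega
  obtain ⟨φ, rfl, hφ⟩ := Walk.mem_support_iff_exists_getVert.1 hy
  have hφ0 : φ ≠ 0 := by rintro rfl; exact hyu P.getVert_zero
  have hφd : φ ≠ P.length := by rintro rfl; exact hyv P.getVert_length
  by_cases hnear : P.length - φ + M ≤ ρ
  · right
    have := hG.dist_triangle (u := v) (v := P.getVert φ) (w := x)
    have := P.dist_getVert_le hφ
    rw [P.getVert_length, SimpleGraph.dist_comm] at this
    omega
  · left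
    have := hG.dist_triangle (u := P.getVert a) (v := P.getVert φ) (w := x)
    rcases le_total φ a with hφa | hφa
    · have := P.dist_getVert_le hφa
      rw [SimpleGraph.dist_comm] at this
      omega
    · have := P.dist_getVert_le hφa
      omega

lemma exists_mem_dist_le_sSup {S : Set V} {l : List V} {y₀ : V}
    (hy₀ : y₀ ∈ l) {R : ℕ} (hR : ∀ a b, G.dist a b ≤ R) {x : V} (hx : x ∉ S) :
    ∃ y ∈ l, G.dist x y ≤ sSup {m : ℕ | ∃ x ∉ S, m = sInf {d : ℕ | ∃ y ∈ l, d = G.dist x y}} := by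
  have hne (x : V) : {d | ∃ y ∈ l, d = G.dist x y}.Nonempty := ⟨_, y₀, hy₀, rfl⟩
  obtain ⟨y, hy, hxy⟩ := Nat.sInf_mem (hne x)
  refine ⟨y, hy, hxy ▸ le_csSup ⟨R, ?_⟩ ⟨x, hx, rfl⟩⟩
  rintro _ ⟨x', -, rfl⟩
  obtain ⟨y', -, e⟩ := Nat.sInf_mem (hne x')
  exact e ▸ hR _ _

end Graph

section Burning

variable {V : Type*} {G : SimpleGraph V} {k : ℕ}

lemma burnable_of_forall_dist_le (c : V) (R : ℕ) (h : ∀ x, G.Reachable c x ∧ G.dist c x ≤ R) :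
    Burnable G (R + 1) :=
  ⟨fun _ => c, fun x => ⟨0, by simpa using h x⟩⟩

lemma burnable_succ_of_forall (hG : G.Connected) (c : V) (σ : Fin k → V)
    (h : ∀ x, G.dist c x ≤ k ∨ ∃ j : Fin k, G.dist (σ j) x ≤ k - 1 - j) :
    Burnable G (k + 1) := by
  refine ⟨Fin.cons c σ, fun x => ?_⟩
  rcases h x with hc | ⟨j, hj⟩
  · exact ⟨0, hG.preconnected _ _, by simpa using hc⟩
  · exact ⟨j.succ, hG.preconnected _ _, by simp only [Fin.cons_succ, Fin.val_succ]; omega⟩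

lemma Burnable.exists_forall_dist_le (hG : G.Connected) (h : Burnable G k) :
    ∃ R, ∀ a b, G.dist a b ≤ R := by
  obtain ⟨σ, hσ⟩ := h
  refine ⟨k + Finset.univ.sup (fun ij : Fin k × Fin k => G.dist (σ ij.1) (σ ij.2)) + k,
    fun a b => ?_⟩
  obtain ⟨i, -, hi⟩ := hσ a
  obtain ⟨j, -, hj⟩ := hσ b
  have hij : G.dist (σ i) (σ j) ≤ _ :=
    Finset.le_sup (f := fun ij : Fin k × Fin k => G.dist (σ ij.1) (σ ij.2)) (Finset.mem_univ (i, j))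
  have h₁ : G.dist a b ≤ G.dist a (σ i) + G.dist (σ i) b := hG.dist_triangle
  have h₂ : G.dist (σ i) b ≤ G.dist (σ i) (σ j) + G.dist (σ j) b := hG.dist_triangle
  have h₀ : G.dist a (σ i) = G.dist (σ i) a := dist_comm
  omega

end Burning

section DeleteVerts

variable {V : Type*} {T : SimpleGraph V} {I : Set V} {a b u v : V}

lemma deleteVerts_adj : (deleteVerts T I).Adj a b ↔ T.Adj a b ∧ a ∉ I ∧ b ∉ I := by
  rw [deleteVerts, fromRel_adj]
  constructor
  · rintro ⟨-, h | ⟨h, hb, ha⟩⟩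
    exacts [h, ⟨h.symm, ha, hb⟩]
  · intro h
    exact ⟨h.1.ne, Or.inl h⟩

lemma deleteVerts_le : deleteVerts T I ≤ T := fun _ _ h => (deleteVerts_adj.1 h).1

lemma SimpleGraph.Reachable.notMem_of_deleteVerts (h : (deleteVerts T I).Reachable a b)
    (ha : a ∉ I) : b ∉ I := by
  obtain ⟨p⟩ := h.symm
  cases p with
  | nil => exact ha
  | cons hadj _ => exact (deleteVerts_adj.1 hadj).2.1

lemma SimpleGraph.Walk.reachable_deleteVerts (p : T.Walk a b) (hp : ∀ w ∈ p.support, w ∉ I) :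
    (deleteVerts T I).Reachable a b := by
  refine ⟨p.transfer _ fun e he => ?_⟩
  induction p with
  | nil => simp at he
  | cons hadj p ih =>
    simp only [Walk.edges_cons, List.mem_cons] at he
    rcases he with rfl | he
    · exact deleteVerts_adj.2 ⟨hadj, hp _ (by simp), hp _ (by simp)⟩
    · exact ih (fun w hw => hp w (by simp [hw])) he

lemma exists_mem_dist_le_of_not_reachable_deleteVerts (hT : T.Connected)
    (h : ¬ (deleteVerts T I).Reachable a b) : ∃ w ∈ I, T.dist b w ≤ T.dist b a := by
  classical
  obtain ⟨p, hp⟩ := hT.exists_walk_length_eq_dist b a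
  obtain ⟨w, hw, hwI⟩ : ∃ w ∈ p.support, w ∈ I := by
    by_contra! hI
    exact h (p.reachable_deleteVerts hI).symm
  refine ⟨w, hwI, ?_⟩
  calc T.dist b w ≤ (p.takeUntil w hw).length := T.dist_le _
    _ ≤ p.length := p.length_takeUntil_le_length hw
    _ = T.dist b a := hp

lemma not_reachable_deleteVerts_of_isPath (hT : T.IsAcyclic) {P : T.Walk u v} (hP : P.IsPath)
    (hu : u ∉ I) {w : V} (hw : w ∈ P.support) (hwI : w ∈ I) :
    ¬ (deleteVerts T I).Reachable u v := by
  classical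
  rintro ⟨p⟩
  have hQ : (p.bypass.mapLe deleteVerts_le).IsPath := p.bypass_isPath.mapLe _
  obtain rfl : P = p.bypass.mapLe deleteVerts_le :=
    congrArg Subtype.val ((hT.subsingleton_path u v).elim ⟨P, hP⟩ ⟨_, hQ⟩)
  rw [Walk.support_mapLe_eq_support] at hw
  exact (Reachable.notMem_of_deleteVerts ⟨p.bypass.takeUntil w hw⟩ hu) hwI

end DeleteVerts

/-- `T'` is the graph on `S` obtained from `T` by deleting `I`, keeping the components of `u` and
`v`, and joining `u` to `v`. -/
structure IsShortcut {V : Type*} (T : SimpleGraph V) (I : Set V) (u v : V) (S : Set V)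
    (T' : SimpleGraph S) : Prop where
  mem_iff : ∀ x, x ∈ S ↔ (deleteVerts T I).Reachable u x ∨ (deleteVerts T I).Reachable v x
  adj_iff : ∀ a b : S, T'.Adj a b ↔
    a ≠ b ∧ (T.Adj a b ∨ a.1 = u ∧ b.1 = v ∨ a.1 = v ∧ b.1 = u)
  left_notMem : u ∉ I
  right_notMem : v ∉ I

namespace IsShortcut

variable {V : Type*} {T : SimpleGraph V} {I S : Set V} {u v : V} {T' : SimpleGraph S}

lemma of_eq (hu : u ∉ I) (hv : v ∉ I)
    (hS : S = {x | (deleteVerts T I).Reachable u x ∨ (deleteVerts T I).Reachable v x})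
    (hT' : T' = fromRel fun a b : S => T.Adj a b ∨ a.1 = u ∧ b.1 = v ∧ u ≠ v) :
    IsShortcut T I u v S T' where
  mem_iff x := by rw [hS]; rfl
  adj_iff a b := by
    rw [hT', fromRel_adj]
    refine and_congr_right fun hab => ?_
    have hne : a.1 ≠ b.1 := fun h => hab (Subtype.ext h)
    constructor
    · rintro ((h | ⟨rfl, rfl, -⟩) | (h | ⟨rfl, rfl, -⟩))
      exacts [Or.inl h, Or.inr (Or.inl ⟨rfl, rfl⟩), Or.inl h.symm, Or.inr (Or.inr ⟨rfl, rfl⟩)]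
    · rintro (h | ⟨rfl, rfl⟩ | ⟨rfl, rfl⟩)
      exacts [Or.inl (Or.inl h), Or.inl (Or.inr ⟨rfl, rfl, hne⟩),
        Or.inr (Or.inr ⟨rfl, rfl, hne.symm⟩)]
  left_notMem := hu
  right_notMem := hv

variable (h : IsShortcut T I u v S T')
include h

lemma symm : IsShortcut T I v u S T' where
  mem_iff x := (h.mem_iff x).trans or_comm
  adj_iff a b := (h.adj_iff a b).trans (by tauto)
  left_notMem := h.right_notMem
  right_notMem := h.left_notMem

lemma mem_of_reachable_left {x : V} (hx : (deleteVerts T I).Reachable u x) : x ∈ S :=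
  (h.mem_iff x).2 (Or.inl hx)

lemma left_mem : u ∈ S := h.mem_of_reachable_left .rfl

lemma reachable_right_of_not_left {x : S} (hx : ¬ (deleteVerts T I).Reachable u x) :
    (deleteVerts T I).Reachable v x :=
  ((h.mem_iff x).1 x.2).resolve_left hx

lemma notMem (x : S) : x.1 ∉ I := by
  rcases (h.mem_iff x).1 x.2 with hx | hx
  exacts [hx.notMem_of_deleteVerts h.left_notMem, hx.notMem_of_deleteVerts h.right_notMem]

lemma reachable_left_iff_of_adj {a b : S} (hab : T.Adj a b) :
    (deleteVerts T I).Reachable u a ↔ (deleteVerts T I).Reachable u b :=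
  have hab' : (deleteVerts T I).Adj a b := deleteVerts_adj.2 ⟨hab, h.notMem a, h.notMem b⟩
  ⟨fun ha => ha.trans hab'.reachable, fun hb => hb.trans hab'.symm.reachable⟩

lemma exists_walk_length_eq {a b : V} (p : (deleteVerts T I).Walk a b) (ha : a ∈ S)
    (hb : b ∈ S) : ∃ q : T'.Walk ⟨a, ha⟩ ⟨b, hb⟩, q.length = p.length := by
  classical
  have hsupp : ∀ w ∈ p.support, w ∈ S := fun w hw =>
    (h.mem_iff w).2 (((h.mem_iff a).1 ha).imp
      (·.trans ⟨p.takeUntil w hw⟩) (·.trans ⟨p.takeUntil w hw⟩))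
  let f : (deleteVerts T I).induce S →g T' :=
    ⟨id, fun {x y} hxy => (h.adj_iff x y).2 ⟨hxy.ne, Or.inl (deleteVerts_le hxy)⟩⟩
  refine ⟨(p.induce S hsupp).map f, ?_⟩
  rw [Walk.length_map, ← Walk.length_map (Embedding.induce S).toHom, Walk.map_induce]
  rfl

lemma reachable_left {x : S} (hx : (deleteVerts T I).Reachable u x) :
    T'.Reachable ⟨u, h.left_mem⟩ x :=
  let ⟨p⟩ := hx
  let ⟨q, _⟩ := h.exists_walk_length_eq p h.left_mem x.2
  ⟨q⟩

lemma dist_left_le (hT : T.IsAcyclic) {x : S} (hx : (deleteVerts T I).Reachable u x) :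
    T'.dist ⟨u, h.left_mem⟩ x ≤ T.dist u x := by
  classical
  obtain ⟨p⟩ := hx
  obtain ⟨q, hq⟩ := h.exists_walk_length_eq p.bypass h.left_mem x.2
  calc T'.dist ⟨u, h.left_mem⟩ x ≤ q.length := T'.dist_le q
    _ = (p.bypass.mapLe deleteVerts_le).length := by rw [hq, Walk.length_mapLe]
    _ = T.dist u x := hT.length_eq_dist (p.bypass_isPath.mapLe _)

lemma adj_left_right (huv : u ≠ v) : T'.Adj ⟨u, h.left_mem⟩ ⟨v, h.symm.left_mem⟩ :=
  (h.adj_iff _ _).2 ⟨fun e => huv (congrArg Subtype.val e), Or.inr (Or.inl ⟨rfl, rfl⟩)⟩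

lemma reachable_left_right : T'.Reachable ⟨u, h.left_mem⟩ ⟨v, h.symm.left_mem⟩ := by
  by_cases huv : u = v
  · subst huv
    rfl
  · exact (h.adj_left_right huv).reachable

lemma dist_left_right_le_one : T'.dist ⟨u, h.left_mem⟩ ⟨v, h.symm.left_mem⟩ ≤ 1 := by
  by_cases huv : u = v
  · subst huv
    simp
  · exact (dist_eq_one_iff_adj.2 (h.adj_left_right huv)).le

lemma connected : T'.Connected := by
  have hu (x : S) : T'.Reachable ⟨u, h.left_mem⟩ x := by
    rcases (h.mem_iff x).1 x.2 with hx | hx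
    exacts [h.reachable_left hx, h.reachable_left_right.trans (h.symm.reachable_left hx)]
  have : Nonempty S := ⟨⟨u, h.left_mem⟩⟩
  exact ⟨fun x y => (hu x).symm.trans (hu y)⟩

lemma dist_le_dist_add_dist (hT : T.IsAcyclic) {x y : S} (hx : (deleteVerts T I).Reachable u x)
    (hy : (deleteVerts T I).Reachable u y) : T'.dist x y ≤ T.dist x u + T.dist u y := by
  have h₁ := h.dist_left_le hT hx
  have h₂ := h.dist_left_le hT hy
  have := h.connected.dist_triangle (u := x) (v := ⟨u, h.left_mem⟩) (w := y)
  have : T'.dist x ⟨u, h.left_mem⟩ = T'.dist ⟨u, h.left_mem⟩ x := SimpleGraph.dist_comm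
  have : T.dist x u = T.dist u x := SimpleGraph.dist_comm
  omega

lemma burnable {R : ℕ} (hT : T.IsAcyclic) (hR : ∀ a b, T.dist a b ≤ R) : Burnable T' (R + 2) := by
  refine burnable_of_forall_dist_le ⟨u, h.left_mem⟩ (R + 1) fun x =>
    ⟨h.connected.preconnected _ _, ?_⟩
  rcases (h.mem_iff x).1 x.2 with hx | hx
  · exact (h.dist_left_le hT hx).trans ((hR _ _).trans (Nat.le_succ R))
  · have := h.connected.dist_triangle (u := ⟨u, h.left_mem⟩) (v := ⟨v, h.symm.left_mem⟩) (w := x)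
    have := h.dist_left_right_le_one
    have := h.symm.dist_left_le hT hx
    have := hR v x
    omega

/-- The lower bound comes from a potential that is `d(x₀, ·)` on the side of `u` and
`d(x₀, u) + 1 + d(v, ·)` on the side of `v`, and grows by at most one along each edge of `T'`. -/
lemma potential_le_dist (hT : T.Connected) (hnr : ¬ (deleteVerts T I).Reachable u v) {x₀ : S}
    (hx₀ : (deleteVerts T I).Reachable u x₀) (y : S) :
    ((deleteVerts T I).Reachable u y → T.dist x₀ y ≤ T'.dist x₀ y) ∧
      (¬ (deleteVerts T I).Reachable u y → T.dist x₀ u + 1 + T.dist v y ≤ T'.dist x₀ y) := by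
  classical
  set f : S → ℕ := fun z =>
    if (deleteVerts T I).Reachable u z then T.dist x₀ z else T.dist x₀ u + 1 + T.dist v z
  have hf : ∀ a b : S, T'.Adj a b → f b ≤ f a + 1 := by
    intro a b hab
    rcases (h.adj_iff a b).1 hab with ⟨-, hab | ⟨ha, hb⟩ | ⟨ha, hb⟩⟩
    · have h1 : T.dist a b ≤ 1 := (dist_eq_one_iff_adj.2 hab).le
      by_cases hau : (deleteVerts T I).Reachable u a
      · have hbu := (h.reachable_left_iff_of_adj hab).1 hau
        simp only [f, if_pos hau, if_pos hbu]
        have := hT.dist_triangle (u := x₀.1) (v := a) (w := b)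
        omega
      · have hbu := mt (h.reachable_left_iff_of_adj hab).2 hau
        simp only [f, if_neg hau, if_neg hbu]
        have := hT.dist_triangle (u := v) (v := a) (w := b)
        omega
    all_goals
      simp only [f, ha, hb, if_pos (Reachable.refl u), if_neg hnr, SimpleGraph.dist_self]
      omega
  have := h.connected.preconnected x₀ y |>.le_add_dist hf
  simp only [f, if_pos hx₀, SimpleGraph.dist_self, zero_add] at this
  constructor <;> intro hy <;> simpa [hy] using this

lemma dist_le_dist_of_reachable_left (hT : T.Connected) (hnr : ¬ (deleteVerts T I).Reachable u v)
    {x y : S} (hx : (deleteVerts T I).Reachable u x) (hy : (deleteVerts T I).Reachable u y) :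
    T.dist x y ≤ T'.dist x y :=
  (h.potential_le_dist hT hnr hx y).1 hy

lemma dist_add_one_add_dist_le (hT : T.Connected) (hnr : ¬ (deleteVerts T I).Reachable u v)
    {x y : S} (hx : (deleteVerts T I).Reachable u x) (hy : (deleteVerts T I).Reachable v y) :
    T.dist x u + 1 + T.dist v y ≤ T'.dist x y :=
  (h.potential_le_dist hT hnr hx y).2 fun hu => hnr (hu.trans hy.symm)

/-- If both sides had a vertex burnt only from across the bridge, the two sources burning across
would each also reach the other's target. -/
lemma side_burnt_from_itself (hT : T.IsTree) (hnr : ¬ (deleteVerts T I).Reachable u v) {p : ℕ}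
    {σ : Fin p → S} (hσ : ∀ x, ∃ j : Fin p, T'.dist (σ j) x ≤ p - 1 - j) :
    (∀ x : S, (deleteVerts T I).Reachable v x →
      ∃ j : Fin p, (deleteVerts T I).Reachable v (σ j) ∧ T'.dist (σ j) x ≤ p - 1 - j) ∨
    (∀ x : S, (deleteVerts T I).Reachable u x →
      ∃ j : Fin p, (deleteVerts T I).Reachable u (σ j) ∧ T'.dist (σ j) x ≤ p - 1 - j) := by
  have hnr' : ¬ (deleteVerts T I).Reachable v u := fun h => hnr h.symm
  by_contra! ⟨⟨x₂, hx₂, hx₂σ⟩, ⟨x₁, hx₁, hx₁σ⟩⟩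
  obtain ⟨j₂, hj₂⟩ := hσ x₂
  obtain ⟨j₁, hj₁⟩ := hσ x₁
  have hj₂u : (deleteVerts T I).Reachable u (σ j₂) := by
    by_contra hj₂u
    exact (hx₂σ j₂ (h.reachable_right_of_not_left hj₂u)).not_ge hj₂
  have hj₁v : (deleteVerts T I).Reachable v (σ j₁) := by
    by_contra hj₁v
    exact (hx₁σ j₁ (h.symm.reachable_right_of_not_left hj₁v)).not_ge hj₁
  have := h.dist_add_one_add_dist_le hT.connected hnr hj₂u hx₂
  have := h.symm.dist_add_one_add_dist_le hT.connected hnr' hj₁v hx₁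
  have := hx₁σ j₂ hj₂u
  have := hx₂σ j₁ hj₁v
  have := h.dist_le_dist_add_dist hT.isAcyclic hj₂u hx₁
  have := h.symm.dist_le_dist_add_dist hT.isAcyclic hj₁v hx₂
  omega

lemma exists_source_reaching_across (hT : T.Connected) (hnr : ¬ (deleteVerts T I).Reachable u v)
    {p : ℕ} {σ : Fin p → S} (hσ : ∀ x, ∃ j : Fin p, T'.dist (σ j) x ≤ p - 1 - j)
    (hright : ∀ x : S, (deleteVerts T I).Reachable v x →
      ∃ j : Fin p, (deleteVerts T I).Reachable v (σ j) ∧ T'.dist (σ j) x ≤ p - 1 - j) :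
    ∃ ρ, ∃ j₀ : Fin p, ρ + T.dist (σ j₀) v ≤ p - 1 - j₀ ∧
      ∀ x : S, (deleteVerts T I).Reachable u x →
        (∃ j : Fin p, T.dist (σ j) x ≤ p - 1 - j) ∨ T.dist u x < ρ := by
  classical
  have hnr' : ¬ (deleteVerts T I).Reachable v u := fun h => hnr h.symm
  set js := Finset.univ.filter fun j : Fin p =>
    (deleteVerts T I).Reachable v (σ j) ∧ T.dist (σ j) v ≤ p - 1 - j
  obtain ⟨jv, hjv, hjvd⟩ := hright ⟨v, h.symm.left_mem⟩ .rfl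
  have hjv' : jv ∈ js := by
    have := h.symm.dist_le_dist_of_reachable_left hT hnr' hjv (y := ⟨v, h.symm.left_mem⟩) .rfl
    simp only [js, Finset.mem_filter, Finset.mem_univ, true_and]
    exact ⟨hjv, this.trans hjvd⟩
  obtain ⟨j₀, hj₀, hmax⟩ := js.exists_max_image (fun j => p - 1 - j - T.dist (σ j) v) ⟨jv, hjv'⟩
  simp only [js, Finset.mem_filter, Finset.mem_univ, true_and] at hj₀ hmax
  refine ⟨p - 1 - j₀ - T.dist (σ j₀) v, j₀, by omega, fun x hx => ?_⟩
  by_cases hcov : ∃ j : Fin p, (deleteVerts T I).Reachable u (σ j) ∧ T'.dist (σ j) x ≤ p - 1 - j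
  · obtain ⟨j, hj, hjx⟩ := hcov
    exact Or.inl ⟨j, (h.dist_le_dist_of_reachable_left hT hnr hj hx).trans hjx⟩
  · right
    obtain ⟨j, hjx⟩ := hσ x
    have hj : (deleteVerts T I).Reachable v (σ j) :=
      h.reachable_right_of_not_left fun hj => hcov ⟨j, hj, hjx⟩
    have := h.symm.dist_add_one_add_dist_le hT hnr' hj hx
    have := hmax j ⟨hj, by omega⟩
    omega

lemma burnable_succ_of_right (hT : T.Connected) (hnr : ¬ (deleteVerts T I).Reachable u v)
    (P : T.Walk u v) {p M : ℕ} {σ : Fin p → S}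
    (hσ : ∀ x, ∃ j : Fin p, T'.dist (σ j) x ≤ p - 1 - j)
    (hright : ∀ x : S, (deleteVerts T I).Reachable v x →
      ∃ j : Fin p, (deleteVerts T I).Reachable v (σ j) ∧ T'.dist (σ j) x ≤ p - 1 - j)
    (hM : P.length + 2 * M ≤ 2 * p + 2)
    (hattach : ∀ x ∉ S, ∃ y ∈ P.support, y ≠ u ∧ y ≠ v ∧ T.dist y x ≤ M) :
    Burnable T (p + 1) := by
  have hnr' : ¬ (deleteVerts T I).Reachable v u := fun h => hnr h.symm
  obtain ⟨ρ, j₀, hj₀, hreach⟩ := h.exists_source_reaching_across hT hnr hσ hright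
  obtain ⟨c, hc⟩ := P.exists_center hT (by omega : ρ ≤ p) hM
  refine burnable_succ_of_forall hT c (fun j => σ j) fun x => ?_
  by_cases hxS : x ∈ S
  · rcases (h.mem_iff x).1 hxS with hx | hx
    · exact (hreach ⟨x, hxS⟩ hx).symm.imp (hc x).1 id
    · obtain ⟨j, hj, hjx⟩ := hright ⟨x, hxS⟩ hx
      exact Or.inr ⟨j, (h.symm.dist_le_dist_of_reachable_left hT hnr' hj hx).trans hjx⟩
  · obtain ⟨y, hy, hyu, hyv, hyx⟩ := hattach x hxS
    refine ((hc x).2 y hy hyu hyv hyx).imp id fun hvx => ⟨j₀, ?_⟩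
    have := hT.dist_triangle (u := (σ j₀).1) (v := v) (w := x)
    omega

lemma exists_internal_dist_le (hT : T.Connected) {P : T.Walk u v}
    (hI : I = {x | x ∈ P.support ∧ x ≠ u ∧ x ≠ v}) {x y : V} (hx : x ∉ S) (hy : y ∈ P.support) :
    ∃ w ∈ P.support, w ≠ u ∧ w ≠ v ∧ T.dist w x ≤ T.dist x y := by
  by_cases hyI : y ∈ I
  · rw [hI] at hyI
    exact ⟨y, hyI.1, hyI.2.1, hyI.2.2, SimpleGraph.dist_comm.le⟩
  have hxy : ¬ (deleteVerts T I).Reachable y x := by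
    have : y = u ∨ y = v := by
      by_contra! hne
      exact hyI (hI ▸ ⟨hy, hne⟩)
    rcases this with rfl | rfl
    exacts [fun hr => hx (h.mem_of_reachable_left hr),
      fun hr => hx (h.symm.mem_of_reachable_left hr)]
  obtain ⟨w, hwI, hw⟩ := exists_mem_dist_le_of_not_reachable_deleteVerts hT hxy
  rw [hI] at hwI
  exact ⟨w, hwI.1, hwI.2.1, hwI.2.2, SimpleGraph.dist_comm.le.trans hw⟩

lemma burnable_succ_of_length_le_one (hT : T.Connected) {P : T.Walk u v}
    (hI : I = {x | x ∈ P.support ∧ x ≠ u ∧ x ≠ v}) (hd : P.length ≤ 1) {p : ℕ}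
    (hp : Burnable T' p) : Burnable T (p + 1) := by
  have hIempty (z : V) : z ∉ I := by
    rw [hI]
    rintro ⟨hz, hzu, hzv⟩
    obtain ⟨n, rfl, hn⟩ := Walk.mem_support_iff_exists_getVert.1 hz
    rcases Nat.le_one_iff_eq_zero_or_eq_one.1 (hn.trans hd) with rfl | rfl
    exacts [hzu P.getVert_zero, hzv (P.getVert_of_length_le hd)]
  have hS (x : V) : x ∈ S := h.mem_of_reachable_left
    ((hT.preconnected u x).some.reachable_deleteVerts fun w _ => hIempty w)
  have hadj (a b : S) (hab : T'.Adj a b) : T.Adj a b := by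
    rcases (h.adj_iff a b).1 hab with ⟨hne, hab | ⟨ha, hb⟩ | ⟨ha, hb⟩⟩
    · exact hab
    all_goals
      have huv : u ≠ v := fun e => hne (Subtype.ext (by rw [ha, hb, e]))
      have hP : P.length = 1 := by
        have := mt (Walk.eq_of_length_eq_zero (p := P)) huv
        omega
      rw [ha, hb]
    exacts [Walk.adj_of_length_eq_one hP, (Walk.adj_of_length_eq_one hP).symm]
  obtain ⟨σ, hσ⟩ := hp
  refine burnable_succ_of_forall hT u (fun j => σ j) fun x => Or.inr ?_
  obtain ⟨j, hjr, hj⟩ := hσ ⟨x, hS x⟩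
  exact ⟨j, (hjr.dist_map_le ⟨Subtype.val, hadj _ _⟩).trans hj⟩

lemma burnable_succ_of_two_le_length (hT : T.IsTree) {P : T.Walk u v} (hP : P.IsPath)
    (hI : I = {x | x ∈ P.support ∧ x ≠ u ∧ x ≠ v}) (hd : 2 ≤ P.length) {p M : ℕ}
    (hp : Burnable T' p) (hM : P.length + 2 * M ≤ 2 * p + 2)
    (hattach : ∀ x ∉ S, ∃ y ∈ P.support, y ≠ u ∧ y ≠ v ∧ T.dist y x ≤ M) :
    Burnable T (p + 1) := by
  have hI₁ : P.getVert 1 ∈ I := by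
    have hinj {i j : ℕ} (hi : i ≤ P.length) (hj : j ≤ P.length) (e : P.getVert i = P.getVert j) :
        i = j := hP.getVert_injOn hi hj e
    rw [hI]
    refine ⟨P.getVert_mem_support 1, fun e => ?_, fun e => ?_⟩
    · have := hinj (by omega) (Nat.zero_le _) (e.trans P.getVert_zero.symm)
      omega
    · have := hinj (by omega) le_rfl (e.trans P.getVert_length.symm)
      omega
  have hnr := not_reachable_deleteVerts_of_isPath hT.isAcyclic hP h.left_notMem
    (P.getVert_mem_support 1) hI₁
  obtain ⟨σ, hσ⟩ := hp
  replace hσ (x : S) : ∃ j : Fin p, T'.dist (σ j) x ≤ p - 1 - j :=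
    let ⟨j, _, hj⟩ := hσ x
    ⟨j, hj⟩
  rcases h.side_burnt_from_itself hT hnr hσ with hright | hleft
  · exact h.burnable_succ_of_right hT.connected hnr P hσ hright hM hattach
  · refine h.symm.burnable_succ_of_right hT.connected (fun h => hnr h.symm) P.reverse hσ hleft
      (by rwa [Walk.length_reverse]) fun x hx => ?_
    obtain ⟨y, hy, hyu, hyv, hyx⟩ := hattach x hx
    exact ⟨y, by simpa using hy, hyv, hyu, hyx⟩

end IsShortcut

theorem burning_induction {V : Type*} (T : SimpleGraph V) (hT : T.IsTree)
    (u v : V) (P : T.Walk u v) (hP : P.IsPath)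
    -- `I` is the set of internal vertices of the path `P`
    (I : Set V) (hI : I = {x | x ∈ P.support ∧ x ≠ u ∧ x ≠ v})
    -- `S = V(T₁) ∪ V(T₂)`, where `T₁` (resp. `T₂`) is the connected component of
    -- `T ∖ I` containing `u` (resp. `v`)
    (S : Set V)
    (hS : S = {x | (deleteVerts T I).Reachable u x ∨ (deleteVerts T I).Reachable v x})
    -- `T'` is the disjoint union of `T₁` and `T₂` together with the edge `uv`
    (T' : SimpleGraph S)
    (hT' : T' = SimpleGraph.fromRel
      (fun (a b : S) => T.Adj a.1 b.1 ∨ (a.1 = u ∧ b.1 = v ∧ u ≠ v)))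
    (p : ℕ) (hp : burningNumber T' = p)
    (hcond : T.dist u v +
        2 * sSup {m : ℕ | ∃ x ∉ S, m = sInf {d : ℕ | ∃ y ∈ P.support, d = T.dist x y}}
      ≤ 2 * p + 2) :
    burningNumber T ≤ p + 1 := by
  by_cases hb : ∃ k, Burnable T k
  swap
  · simp [burningNumber, not_exists.1 hb]
  obtain ⟨k, hk⟩ := hb
  obtain ⟨R, hR⟩ := hk.exists_forall_dist_le hT.connected
  have h : IsShortcut T I u v S T' := .of_eq (by simp [hI]) (by simp [hI]) hS hT'
  have hp' : Burnable T' p :=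
    hp ▸ Nat.sInf_mem (s := {k | Burnable T' k}) ⟨_, h.burnable hT.isAcyclic hR⟩
  have hattach (x : V) (hx : x ∉ S) : ∃ y ∈ P.support, y ≠ u ∧ y ≠ v ∧
      T.dist y x ≤ sSup {m : ℕ | ∃ x ∉ S, m = sInf {d : ℕ | ∃ y ∈ P.support, d = T.dist x y}} :=
    let ⟨y, hy, hxy⟩ := exists_mem_dist_le_sSup P.start_mem_support hR hx
    let ⟨w, hw, hwu, hwv, hwx⟩ := h.exists_internal_dist_le hT.connected hI hx hy
    ⟨w, hw, hwu, hwv, hwx.trans hxy⟩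
  rw [← hT.isAcyclic.length_eq_dist hP] at hcond
  refine Nat.sInf_le ?_
  rcases le_or_gt P.length 1 with hd | hd
  · exact h.burnable_succ_of_length_le_one hT.connected hI hd hp'
  · exact h.burnable_succ_of_two_le_length hT hP hI hd hp' hcond hattach
end

section
/- For every k ∈ ℕ, every tree T on n vertices whose growth is at most k satisfies b(T) ≤ ⌈√(n + 400·k⁴)⌉. -/
open SimpleGraph

/-- `G` has growth at most `k`: every vertex of `G` is within distance `k`
of some path in `G`. -/
def GrowthLE {V : Type*} (G : SimpleGraph V) (k : ℕ) : Prop :=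
  ∃ (a b : V) (P : G.Walk a b), P.IsPath ∧ ∀ x : V, ∃ y ∈ P.support, G.dist y x ≤ k

/-!
Let `x₀ … x_L` be a path such that each of the `n` vertices is within distance `k` of it.
Sending each vertex to (the first of) its nearest path vertices splits the graph into hairs;
let `σ t ≤ k` be the depth of the hair at `x_t`. A geodesic from `x_t` to a deepest vertex of
its hair meets the hair at every depth, so `n ≥ L + 1 + ∑ σ t`. A ball of radius `r` around
`x_p` swallows the whole hair at `x_t` once `σ t + |p - t| ≤ r`, so it suffices to cover the
positions `0, …, L` in this one-dimensional picture by balls with distinct radii `k ≤ r < m`.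

The positions are covered from left to right by consecutive blocks, one per radius. A block
of radius `r` has length `2r + 1` minus what the hairs near its two ends stick out of the tent
`r - |p - t|`. If some unused radius ends its block outside the `shadow` of the hairs (where
nothing sticks out), only the overhang inherited at the left end is lost. Otherwise the blocks
of all unused radii would end in the shadow, which has at most `2 ∑ σ t` points, and the largest
radius jumps over all these endpoints; ending its block `k` early loses at most `2k`, paid by
the shadow, or, for the last `5k` radii, by a reserve of `20 k²`. Since the capacity of the
radii is `m² - k²`, this works as soon as `m² ≥ n + 12 k²`.
-/

open Finset

namespace HairCover

variable (L : ℕ) (σ : ℕ → ℕ)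

/-! A hair of height `σ t` stands at each position `t ≤ L`. A block is an interval `[a, c)` of
positions; `excessFrom a` and `excessBefore c` are how far the hairs in the block stick out of
the tents rising from its two ends. -/

def excessFrom (a : ℕ) : ℕ :=
  ((range (L + 1)).filter (a ≤ ·)).sup fun t => σ t + a - t

def excessBefore (c : ℕ) : ℕ :=
  ((range (L + 1)).filter (· < c)).sup fun t => σ t + t + 1 - c

/-- Outside this set both excesses vanish (`t + 1 - σ t` is truncated at `0` on purpose). -/
def shadow : Finset ℕ :=
  (range (L + 1)).biUnion fun t => Ico (t + 1 - σ t) (t + 1 + σ t)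

def shadowAfter (y : ℕ) : ℕ := #((shadow L σ).filter (y < ·))

/-- `p r` is the centre of the ball of radius `r`. -/
def BallsCover (y : ℕ) (U : Finset ℕ) : Prop :=
  ∃ p : ℕ → ℕ, ∀ t, y ≤ t → t ≤ L → ∃ r ∈ U, σ t + Nat.dist (p r) t ≤ r

/-- The end of a block of radius `b` starting at `y` when nothing sticks out at its right end. -/
def landing (y b : ℕ) : ℕ := y + 2 * b + 1 - excessFrom L σ y

def capacity (U : Finset ℕ) : ℕ := ∑ r ∈ U, (2 * r + 1)

def reserve (k u : ℕ) : ℕ := 4 * k * min u (5 * k)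

/-- Twice the positions left to cover, plus twice the overhang inherited at `y`, plus one unit
per shadow point ahead, plus the reserve: as long as the unused radii can pay for this, the
covering can be completed. -/
def potential (k y : ℕ) (U : Finset ℕ) : ℕ :=
  2 * (L + 1 - y) + 2 * excessFrom L σ y + shadowAfter L σ y + reserve k #U

variable {L σ}

lemma le_excessFrom {a t : ℕ} (hat : a ≤ t) (ht : t ≤ L) :
    σ t ≤ excessFrom L σ a + (t - a) := by
  have hmem : t ∈ (range (L + 1)).filter (a ≤ ·) := mem_filter.2 ⟨mem_range.2 (by omega), hat⟩
  have := le_sup (f := fun t => σ t + a - t) hmem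
  unfold excessFrom
  omega

lemma le_excessBefore {c t : ℕ} (htc : t < c) (ht : t ≤ L) :
    σ t + t + 1 ≤ excessBefore L σ c + c := by
  have hmem : t ∈ (range (L + 1)).filter (· < c) := mem_filter.2 ⟨mem_range.2 (by omega), htc⟩
  have := le_sup (f := fun t => σ t + t + 1 - c) hmem
  unfold excessBefore
  omega

lemma excessFrom_le {k : ℕ} (hσ : ∀ t, σ t ≤ k) (a : ℕ) : excessFrom L σ a ≤ k :=
  Finset.sup_le fun t ht => by have := hσ t; have := (mem_filter.1 ht).2; omega

lemma excessBefore_le {k : ℕ} (hσ : ∀ t, σ t ≤ k) (c : ℕ) : excessBefore L σ c ≤ k :=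
  Finset.sup_le fun t ht => by have := hσ t; have := (mem_filter.1 ht).2; omega

lemma excessFrom_eq_zero {a : ℕ} (ha : a ∉ shadow L σ) : excessFrom L σ a = 0 := by
  refine Nat.eq_zero_of_le_zero (Finset.sup_le fun t ht => ?_)
  obtain ⟨ht, hat⟩ := mem_filter.1 ht
  by_contra h
  beta_reduce at h
  exact ha (mem_biUnion.2 ⟨t, ht, mem_Ico.2 (by omega)⟩)

lemma excessBefore_eq_zero {c : ℕ} (hc : c ∉ shadow L σ) : excessBefore L σ c = 0 := by
  refine Nat.eq_zero_of_le_zero (Finset.sup_le fun t ht => ?_)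
  obtain ⟨ht, htc⟩ := mem_filter.1 ht
  by_contra h
  beta_reduce at h
  exact hc (mem_biUnion.2 ⟨t, ht, mem_Ico.2 (by omega)⟩)

lemma card_shadow_le : #(shadow L σ) ≤ 2 * ∑ t ∈ range (L + 1), σ t :=
  calc #(shadow L σ) ≤ ∑ t ∈ range (L + 1), #(Ico (t + 1 - σ t) (t + 1 + σ t)) :=
        card_biUnion_le
    _ ≤ ∑ t ∈ range (L + 1), 2 * σ t := sum_le_sum fun t _ => by rw [Nat.card_Ico]; omega
    _ = 2 * ∑ t ∈ range (L + 1), σ t := by rw [mul_sum]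

lemma shadowAfter_anti {a b : ℕ} (hab : a ≤ b) : shadowAfter L σ b ≤ shadowAfter L σ a :=
  card_le_card (monotone_filter_right _ fun _ _ hz => lt_of_le_of_lt hab hz)

lemma shadowAfter_le_add (a b : ℕ) : shadowAfter L σ a ≤ shadowAfter L σ b + (b - a) := by
  have hsub : (shadow L σ).filter (a < ·) ⊆ (shadow L σ).filter (b < ·) ∪ Ioc a b := by
    intro z hz
    obtain ⟨hzS, haz⟩ := mem_filter.1 hz
    rcases lt_or_ge b z with hbz | hzb
    · exact mem_union_left _ (mem_filter.2 ⟨hzS, hbz⟩)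
    · exact mem_union_right _ (mem_Ioc.2 ⟨haz, hzb⟩)
  calc shadowAfter L σ a ≤ #((shadow L σ).filter (b < ·) ∪ Ioc a b) := card_le_card hsub
    _ ≤ shadowAfter L σ b + (b - a) := by
      rw [← Nat.card_Ioc]; exact card_union_le _ _

lemma card_add_shadowAfter_le {a b : ℕ} {T : Finset ℕ} (hab : a ≤ b) (hT : T ⊆ shadow L σ)
    (hTab : T ⊆ Ioc a b) : #T + shadowAfter L σ b ≤ shadowAfter L σ a := by
  have hdisj : Disjoint T ((shadow L σ).filter (b < ·)) := by
    refine disjoint_left.2 fun z hzT hz => ?_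
    have := mem_Ioc.1 (hTab hzT)
    have := (mem_filter.1 hz).2
    omega
  rw [shadowAfter, ← card_union_of_disjoint hdisj]
  refine card_le_card (union_subset (fun z hz => ?_) fun z hz => ?_)
  · exact mem_filter.2 ⟨hT hz, (mem_Ioc.1 (hTab hz)).1⟩
  · exact mem_filter.2 ⟨(mem_filter.1 hz).1, lt_of_le_of_lt hab (mem_filter.1 hz).2⟩

lemma ballsCover_of_lt {y : ℕ} (U : Finset ℕ) (hy : L < y) : BallsCover L σ y U :=
  ⟨id, fun _ hyt htL => absurd (lt_of_le_of_lt htL hy) (not_lt.2 hyt)⟩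

lemma ballsCover_cons {y c r : ℕ} {U : Finset ℕ} (hr : r ∈ U) (hy : excessFrom L σ y ≤ r)
    (hfeas : c - y + excessFrom L σ y + excessBefore L σ c ≤ 2 * r + 1)
    (h : BallsCover L σ c (U.erase r)) : BallsCover L σ y U := by
  classical
  obtain ⟨p, hp⟩ := h
  -- the centre at which the tent of radius `r` just clears the hairs at the left end
  refine ⟨Function.update p r (y + r - excessFrom L σ y), fun t hyt htL => ?_⟩
  rcases lt_or_ge t c with htc | hct
  · have := le_excessFrom (σ := σ) hyt htL
    have := le_excessBefore (σ := σ) htc htL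
    refine ⟨r, hr, ?_⟩
    rw [Function.update_self, Nat.dist]
    omega
  · obtain ⟨r', hr', hcov⟩ := hp t hct htL
    exact ⟨r', mem_of_mem_erase hr', by rwa [Function.update_of_ne (ne_of_mem_erase hr')]⟩

lemma capacity_erase_add {r : ℕ} {U : Finset ℕ} (hr : r ∈ U) :
    capacity (U.erase r) + (2 * r + 1) = capacity U := by
  rw [capacity, capacity, add_comm]
  exact add_sum_erase U (fun r => 2 * r + 1) hr

lemma capacity_Ico {k m : ℕ} (hkm : k ≤ m) : capacity (Ico k m) + k ^ 2 = m ^ 2 := by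
  induction m, hkm using Nat.le_induction with
  | base => simp [capacity]
  | succ m hkm ih =>
    rw [capacity, sum_Ico_succ_top hkm, add_right_comm, ← capacity, ih]
    ring

lemma reserve_mono (k : ℕ) {u v : ℕ} (h : u ≤ v) : reserve k u ≤ reserve k v :=
  Nat.mul_le_mul_left _ (min_le_min_right _ h)

lemma reserve_succ {k u : ℕ} (h : u < 5 * k) : reserve k (u + 1) = reserve k u + 4 * k := by
  rw [reserve, reserve, min_eq_left (by omega), min_eq_left h.le]
  ring

lemma reserve_le (k u : ℕ) : reserve k u ≤ 20 * k ^ 2 :=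
  calc reserve k u ≤ 4 * k * (5 * k) := Nat.mul_le_mul_left _ (min_le_right _ _)
    _ = 20 * k ^ 2 := by ring

lemma landing_add_excessFrom {y b : ℕ} (h : excessFrom L σ y ≤ 2 * b + 1) :
    landing L σ y b + excessFrom L σ y = y + 2 * b + 1 := by
  unfold landing
  omega

lemma potential_clean_step {k y b : ℕ} {U : Finset ℕ} (hσ : ∀ t, σ t ≤ k) (hb : b ∈ U)
    (hbk : k ≤ b) (hz : landing L σ y b ∉ shadow L σ) (hzL : landing L σ y b ≤ L)
    (hpot : potential L σ k y U ≤ 2 * capacity U) :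
    potential L σ k (landing L σ y b) (U.erase b) ≤ 2 * capacity (U.erase b) := by
  have := excessFrom_le hσ (L := L) y
  have hland := landing_add_excessFrom (L := L) (σ := σ) (y := y) (b := b) (by omega)
  have := shadowAfter_anti (L := L) (σ := σ) (show y ≤ landing L σ y b by omega)
  have := reserve_mono k (card_erase_le (s := U) (a := b))
  have := capacity_erase_add hb
  rw [potential, excessFrom_eq_zero hz]
  unfold potential at hpot
  omega

lemma potential_safe_step {k y r : ℕ} {U : Finset ℕ} (hσ : ∀ t, σ t ≤ k) (hr : r ∈ U)
    (hrk : k ≤ r) (hcL : landing L σ y r - k ≤ L)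
    (hpaid : shadowAfter L σ (landing L σ y r - k) + reserve k #(U.erase r) + 4 * k ≤
      shadowAfter L σ y + reserve k #U)
    (hpot : potential L σ k y U ≤ 2 * capacity U) :
    potential L σ k (landing L σ y r - k) (U.erase r) ≤ 2 * capacity (U.erase r) := by
  have := excessFrom_le hσ (L := L) y
  have := excessFrom_le hσ (L := L) (landing L σ y r - k)
  have := landing_add_excessFrom (L := L) (σ := σ) (y := y) (b := r) (by omega)
  have := capacity_erase_add hr
  unfold potential at hpot ⊢
  omega

lemma safe_step_paid {k y : ℕ} {U : Finset ℕ} (hσ : ∀ t, σ t ≤ k) (hU : U.Nonempty)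
    (hk : ∀ b ∈ U, k ≤ b) (hblocked : ∀ b ∈ U, landing L σ y b ∈ shadow L σ) :
    shadowAfter L σ (landing L σ y (U.max' hU) - k) + reserve k #(U.erase (U.max' hU)) + 4 * k ≤
      shadowAfter L σ y + reserve k #U := by
  set r := U.max' hU
  have hex := excessFrom_le hσ (L := L) y
  have hrk := hk r (max'_mem U hU)
  have hcard : #(U.erase r) + 1 = #U := card_erase_add_one (max'_mem U hU)
  have hland := landing_add_excessFrom (L := L) (σ := σ) (y := y) (b := r) (by omega)
  rcases le_or_gt #U (5 * k) with hsmall | hlarge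
  · have := shadowAfter_anti (L := L) (σ := σ) (show y ≤ landing L σ y r - k by omega)
    rw [← hcard, reserve_succ (by omega)]
    omega
  · have himage : #(U.image (landing L σ y)) = #U :=
      card_image_of_injOn fun b hb b' hb' h => by
        have := hk b hb; have := hk b' hb'; unfold landing at h; omega
    have hwindow : U.image (landing L σ y) ⊆ Ioc y (landing L σ y r) := by
      refine image_subset_iff.2 fun b hb => mem_Ioc.2 ?_
      have := hk b hb
      have := le_max' U b hb
      unfold landing
      omega
    have := card_add_shadowAfter_le (by omega) (image_subset_iff.2 hblocked) hwindow
    have := shadowAfter_le_add (L := L) (σ := σ) (landing L σ y r - k) (landing L σ y r)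
    have := reserve_mono k (card_erase_le (s := U) (a := r))
    omega

theorem ballsCover_of_potential_le {k : ℕ} (hσ : ∀ t, σ t ≤ k) (U : Finset ℕ) :
    ∀ y, (∀ r ∈ U, k ≤ r) → potential L σ k y U ≤ 2 * capacity U → BallsCover L σ y U := by
  induction U using Finset.strongInduction with
  | H U ih =>
  intro y hk hpot
  rcases lt_or_ge L y with hy | hy
  · exact ballsCover_of_lt U hy
  have hU : U.Nonempty := by
    rw [nonempty_iff_ne_empty]
    rintro rfl
    simp only [potential, capacity, sum_empty] at hpot
    omega
  have next : ∀ r ∈ U, ∀ c, (c ≤ L → potential L σ k c (U.erase r) ≤ 2 * capacity (U.erase r)) →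
      BallsCover L σ c (U.erase r) := by
    intro r hr c hc
    rcases lt_or_ge L c with hcL | hcL
    · exact ballsCover_of_lt _ hcL
    · exact ih _ (erase_ssubset hr) c (fun b hb => hk b (mem_of_mem_erase hb)) (hc hcL)
  have hex := excessFrom_le hσ (L := L) y
  by_cases hclean : ∃ b ∈ U, landing L σ y b ∉ shadow L σ
  · obtain ⟨b, hb, hz⟩ := hclean
    have := hk b hb
    refine ballsCover_cons hb (by omega) ?_
      (next b hb _ fun hzL => potential_clean_step hσ hb (hk b hb) hz hzL hpot)
    have := landing_add_excessFrom (L := L) (σ := σ) (y := y) (b := b) (by omega)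
    rw [excessBefore_eq_zero hz]
    omega
  · push Not at hclean
    have hr := max'_mem U hU
    have := hk _ hr
    have := excessBefore_le hσ (L := L) (landing L σ y (U.max' hU) - k)
    have := landing_add_excessFrom (L := L) (σ := σ) (y := y) (b := U.max' hU) (by omega)
    refine ballsCover_cons (c := landing L σ y (U.max' hU) - k) hr (by omega) (by omega)
      (next _ hr _ fun hcL => ?_)
    exact potential_safe_step hσ hr (hk _ hr) hcL (safe_step_paid hσ hU hk hclean) hpot

theorem exists_ballsCover {k m : ℕ} (hσ : ∀ t, σ t ≤ k)
    (hm : L + 1 + ∑ t ∈ range (L + 1), σ t + 12 * k ^ 2 ≤ m ^ 2) :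
    BallsCover L σ 0 (Ico k m) := by
  have hkm : k ≤ m := (Nat.pow_le_pow_iff_left two_ne_zero).1 (by omega : k ^ 2 ≤ m ^ 2)
  refine ballsCover_of_potential_le hσ _ 0 (fun r hr => (mem_Ico.1 hr).1) ?_
  have := capacity_Ico hkm
  have := excessFrom_le hσ (L := L) 0
  have := reserve_le k #(Ico k m)
  have := card_le_card (filter_subset (0 < ·) (shadow L σ))
  have := card_shadow_le (L := L) (σ := σ)
  have : k ≤ k ^ 2 := Nat.le_self_pow two_ne_zero k
  unfold potential shadowAfter
  omega

end HairCover

namespace SimpleGraph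

variable {V : Type*} {G : SimpleGraph V}

lemma Walk.dist_getVert_le_s11 {u v : V} (p : G.Walk u v) (i j : ℕ) :
    G.dist (p.getVert i) (p.getVert j) ≤ Nat.dist i j := by
  wlog hij : i ≤ j generalizing i j
  · rw [dist_comm, Nat.dist_comm]
    exact this j i (by omega)
  have e : (p.drop i).getVert (j - i) = p.getVert j := by
    rw [drop_getVert, Nat.add_sub_cancel' hij]
  calc G.dist (p.getVert i) (p.getVert j) ≤ (((p.drop i).take (j - i)).copy rfl e).length :=
        dist_le _
    _ ≤ Nat.dist i j := by simp [Nat.dist_eq_sub_of_le hij]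

variable (G) (x : ℕ → V) (L : ℕ)

noncomputable def infDistSeq (u : V) : ℕ :=
  (range (L + 1)).inf' nonempty_range_add_one fun i => G.dist (x i) u

lemma exists_dist_eq_infDistSeq (u : V) : ∃ i, i ≤ L ∧ G.dist (x i) u = G.infDistSeq x L u := by
  obtain ⟨i, hi, h⟩ := exists_mem_eq_inf' nonempty_range_add_one fun i => G.dist (x i) u
  exact ⟨i, Nat.lt_succ_iff.1 (mem_range.1 hi), h.symm⟩

noncomputable def nearestIdx (u : V) : ℕ := Nat.find (G.exists_dist_eq_infDistSeq x L u)

noncomputable def hairDepth [Fintype V] (t : ℕ) : ℕ :=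
  (univ.filter (G.nearestIdx x L · = t)).sup (G.infDistSeq x L)

variable {G x L}

lemma infDistSeq_le {u : V} {i : ℕ} (hi : i ≤ L) : G.infDistSeq x L u ≤ G.dist (x i) u :=
  inf'_le _ (mem_range.2 (by omega))

lemma nearestIdx_le (u : V) : G.nearestIdx x L u ≤ L :=
  (Nat.find_spec (G.exists_dist_eq_infDistSeq x L u)).1

lemma dist_nearestIdx (u : V) : G.dist (x (G.nearestIdx x L u)) u = G.infDistSeq x L u :=
  (Nat.find_spec (G.exists_dist_eq_infDistSeq x L u)).2

lemma nearestIdx_le_of_dist_eq {u : V} {i : ℕ} (hi : i ≤ L)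
    (h : G.dist (x i) u = G.infDistSeq x L u) : G.nearestIdx x L u ≤ i :=
  Nat.find_min' _ ⟨hi, h⟩

lemma infDistSeq_getVert_le {a b y : V} (P : G.Walk a b) (hy : y ∈ P.support) (u : V) :
    G.infDistSeq P.getVert P.length u ≤ G.dist y u := by
  obtain ⟨i, rfl, hi⟩ := Walk.mem_support_iff_exists_getVert.1 hy
  exact infDistSeq_le hi

lemma nearestIdx_apply (hG : G.Connected) (hx : Set.InjOn x {i | i ≤ L}) {t : ℕ} (ht : t ≤ L) :
    G.nearestIdx x L (x t) = t := by
  have h0 : G.infDistSeq x L (x t) = 0 :=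
    Nat.eq_zero_of_le_zero ((infDistSeq_le ht).trans_eq dist_self)
  have : G.dist (x (G.nearestIdx x L (x t))) (x t) = 0 := by rw [dist_nearestIdx, h0]
  rw [hG.dist_eq_zero_iff] at this
  exact hx (nearestIdx_le _) ht this

lemma exists_nearestIdx_eq_infDistSeq_eq (hG : G.Connected) (u : V) {j : ℕ}
    (hj : j ≤ G.infDistSeq x L u) :
    ∃ w, G.nearestIdx x L w = G.nearestIdx x L u ∧ G.infDistSeq x L w = j := by
  -- the vertex at distance `j` on a geodesic from the nearest path vertex of `u` to `u`
  set t := G.nearestIdx x L u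
  obtain ⟨q, hq⟩ := hG.exists_walk_length_eq_dist (x t) u
  refine ⟨q.getVert j, ?_⟩
  have hxt : G.dist (x t) (q.getVert j) ≤ j := by
    simpa [Nat.dist_eq_sub_of_le] using q.dist_getVert_le_s11 0 j
  have hju : G.dist (q.getVert j) u ≤ G.infDistSeq x L u - j := by
    have := q.dist_getVert_le_s11 j q.length
    rw [Walk.getVert_length, hq, dist_nearestIdx, Nat.dist_eq_sub_of_le (by omega)] at this
    exact this
  set t' := G.nearestIdx x L (q.getVert j)
  have hle : G.infDistSeq x L (q.getVert j) ≤ G.dist (x t) (q.getVert j) :=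
    infDistSeq_le (nearestIdx_le u)
  have hviaW : G.dist (x t') u ≤ G.infDistSeq x L (q.getVert j) + G.dist (q.getVert j) u := by
    rw [← dist_nearestIdx]; exact hG.dist_triangle
  have : G.infDistSeq x L u ≤ G.dist (x t') u := infDistSeq_le (nearestIdx_le _)
  have hdist : G.infDistSeq x L (q.getVert j) = j := by omega
  refine ⟨le_antisymm ?_ (nearestIdx_le_of_dist_eq (nearestIdx_le _) (by omega)), hdist⟩
  exact nearestIdx_le_of_dist_eq (nearestIdx_le u) (by omega)

section Depth

variable [Fintype V]

lemma infDistSeq_le_hairDepth (u : V) :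
    G.infDistSeq x L u ≤ G.hairDepth x L (G.nearestIdx x L u) :=
  le_sup (mem_filter.2 ⟨mem_univ u, rfl⟩)

lemma hairDepth_le {k : ℕ} (h : ∀ u, G.infDistSeq x L u ≤ k) (t : ℕ) :
    G.hairDepth x L t ≤ k :=
  Finset.sup_le fun u _ => h u

lemma sum_hairDepth_add_one_le_card (hG : G.Connected) (hx : Set.InjOn x {i | i ≤ L}) :
    ∑ t ∈ range (L + 1), (G.hairDepth x L t + 1) ≤ Fintype.card V := by
  have hsurj : Set.SurjOn (fun u => (⟨G.nearestIdx x L u, G.infDistSeq x L u⟩ : Σ _ : ℕ, ℕ))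
      (univ : Finset V) ((range (L + 1)).sigma fun t => range (G.hairDepth x L t + 1)) := by
    rintro ⟨t, j⟩ htj
    obtain ⟨ht, hj⟩ := mem_sigma.1 htj
    have hfiber : (univ.filter (G.nearestIdx x L · = t)).Nonempty :=
      ⟨x t, mem_filter.2 ⟨mem_univ _, nearestIdx_apply hG hx (by simpa [Nat.lt_succ_iff] using ht)⟩⟩
    obtain ⟨u, hu, hdepth⟩ := exists_mem_eq_sup _ hfiber (G.infDistSeq x L)
    have hj : j ≤ G.hairDepth x L t := by simpa [Nat.lt_succ_iff] using hj
    obtain ⟨w, hw, hwj⟩ := exists_nearestIdx_eq_infDistSeq_eq hG u (hj.trans_eq hdepth)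
    refine ⟨w, mem_univ w, ?_⟩
    simp only [hw, (mem_filter.1 hu).2, hwj]
  simpa [card_sigma] using card_le_card_of_surjOn _ hsurj

end Depth

end SimpleGraph

lemma burnable_of_forall_exists_dist_le {V : Type*} {G : SimpleGraph V} {m : ℕ} (c : ℕ → V)
    (h : ∀ u, ∃ r < m, G.Reachable (c r) u ∧ G.dist (c r) u ≤ r) : Burnable G m := by
  refine ⟨fun i => c (m - 1 - i), fun u => ?_⟩
  obtain ⟨r, hrm, hreach, hdist⟩ := h u
  refine ⟨⟨m - 1 - r, by omega⟩, ?_⟩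
  simp only [show m - 1 - (m - 1 - r) = r by omega]
  exact ⟨hreach, hdist⟩

lemma burnable_of_ballsCover {V : Type*} [Fintype V] {G : SimpleGraph V} (hG : G.Connected)
    {a b : V} (P : G.Walk a b) {m : ℕ} {U : Finset ℕ} (hU : ∀ r ∈ U, r < m)
    (hcov : HairCover.BallsCover P.length (G.hairDepth P.getVert P.length) 0 U) :
    Burnable G m := by
  obtain ⟨p, hp⟩ := hcov
  refine burnable_of_forall_exists_dist_le (fun r => P.getVert (p r)) fun u => ?_
  set t := G.nearestIdx P.getVert P.length u
  obtain ⟨r, hr, hrt⟩ := hp t (Nat.zero_le _) (nearestIdx_le u)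
  refine ⟨r, hU r hr, hG.preconnected _ _, ?_⟩
  calc G.dist (P.getVert (p r)) u
      ≤ G.dist (P.getVert (p r)) (P.getVert t) + G.dist (P.getVert t) u := hG.dist_triangle
    _ ≤ Nat.dist (p r) t + G.hairDepth P.getVert P.length t := by
      rw [dist_nearestIdx]
      exact add_le_add (P.dist_getVert_le_s11 _ _) (infDistSeq_le_hairDepth u)
    _ ≤ r := by omega

lemma le_ceil_sqrt_sq {x : ℝ} (hx : 0 ≤ x) : x ≤ (⌈√x⌉₊ : ℝ) ^ 2 :=
  calc x = √x ^ 2 := (Real.sq_sqrt hx).symm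
    _ ≤ (⌈√x⌉₊ : ℝ) ^ 2 := pow_le_pow_left₀ (Real.sqrt_nonneg x) (Nat.le_ceil _) 2

theorem burning_of_bounded_growth_weak (k : ℕ) {V : Type*} [Fintype V]
    (T : SimpleGraph V) (hT : T.IsTree) (hk : GrowthLE T k) :
    burningNumber T ≤ ⌈Real.sqrt ((Fintype.card V : ℝ) + 400 * k ^ 4)⌉₊ := by
  obtain ⟨a, b, P, hP, hnear⟩ := hk
  have hconn := hT.connected
  have hdepth : ∀ t, T.hairDepth P.getVert P.length t ≤ k := T.hairDepth_le fun u => by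
    obtain ⟨y, hy, hyu⟩ := hnear u
    exact (infDistSeq_getVert_le P hy u).trans hyu
  have hcount := T.sum_hairDepth_add_one_le_card hconn hP.getVert_injOn
  rw [sum_add_distrib, sum_const, card_range, smul_eq_mul, mul_one] at hcount
  set m := ⌈Real.sqrt ((Fintype.card V : ℝ) + 400 * k ^ 4)⌉₊
  have hmℝ : ((Fintype.card V : ℝ) + 400 * k ^ 4) ≤ (m : ℝ) ^ 2 := le_ceil_sqrt_sq (by positivity)
  have hm : Fintype.card V + 400 * k ^ 4 ≤ m ^ 2 := by exact_mod_cast hmℝ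
  have hk4 : k ^ 2 ≤ k ^ 4 := (Nat.le_self_pow two_ne_zero (k ^ 2)).trans_eq (by ring)
  apply Nat.sInf_le
  exact burnable_of_ballsCover hconn P (fun r hr => (mem_Ico.1 hr).2)
    (HairCover.exists_ballsCover hdepth (by omega))
end

section
/- Let T be a tree with at least one non-leaf vertex, and let T' be the tree obtained from T by deleting all leaves of T. Then b(T) ≤ b(T') + 1. -/
open SimpleGraph

/-!
Every leaf of `T` is adjacent to a vertex of `T'`: two adjacent leaves would form a whole
connected component, hence all of `T`, which has a non-leaf vertex. So if `T'` is burnt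
with `k` sources, keeping the same sources one more round burns every leaf as well, and the
`(k+1)`-st source can be placed anywhere.
-/

namespace SimpleGraph

variable {V V' : Type*} {G : SimpleGraph V} {G' : SimpleGraph V'}

lemma Reachable.dist_map_le_s14 (f : G →g G') {u v : V} (h : G.Reachable u v) :
    G'.dist (f u) (f v) ≤ G.dist u v := by
  obtain ⟨p, hp⟩ := h.exists_walk_length_eq_dist
  calc G'.dist (f u) (f v) ≤ (p.map f).length := dist_le _
    _ = G.dist u v := by rw [Walk.length_map, hp]

lemma Reachable.mem_of_forall_adj_mem {S : Set V} (hS : ∀ x y, x ∈ S → G.Adj x y → y ∈ S)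
    {u v : V} (h : G.Reachable u v) (hu : u ∈ S) : v ∈ S := by
  replace h := (reachable_iff_reflTransGen u v).1 h
  induction h with
  | refl => exact hu
  | tail _ hxy ih => exact hS _ _ ih hxy

lemma Connected.exists_adj_degree_ne_one [G.LocallyFinite] (hG : G.Connected)
    (hnl : ∃ w, G.degree w ≠ 1) {u : V} (hu : G.degree u = 1) :
    ∃ u', G.Adj u u' ∧ G.degree u' ≠ 1 := by
  obtain ⟨u', hadj, huniq⟩ := degree_eq_one_iff_existsUnique_adj.1 hu
  refine ⟨u', hadj, fun hu' => ?_⟩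
  obtain ⟨u'', -, huniq'⟩ := degree_eq_one_iff_existsUnique_adj.1 hu'
  have hclosed : ∀ x y, x ∈ ({u, u'} : Set V) → G.Adj x y → y ∈ ({u, u'} : Set V) := by
    rintro x y (rfl | rfl) hxy
    · exact Or.inr (huniq y hxy)
    · exact Or.inl ((huniq' y hxy).trans (huniq' _ hadj.symm).symm)
  obtain ⟨w, hw⟩ := hnl
  rcases (hG u w).mem_of_forall_adj_mem hclosed (Or.inl rfl) with rfl | rfl
  exacts [hw hu, hw hu']

end SimpleGraph

lemma burnable_card {V : Type*} [Finite V] (G : SimpleGraph V) : Burnable G (Nat.card V) :=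
  ⟨(Finite.equivFin V).symm, fun u => ⟨Finite.equivFin V u, by simp⟩⟩

lemma burnable_burningNumber {V : Type*} [Finite V] (G : SimpleGraph V) :
    Burnable G (burningNumber G) :=
  Nat.sInf_mem (s := {k | Burnable G k}) ⟨_, burnable_card G⟩

lemma Burnable.succ_of_induce {V : Type*} {G : SimpleGraph V} {s : Set V} {k : ℕ}
    (h : Burnable (G.induce s) k) (hs : ∀ u ∉ s, ∃ u' ∈ s, G.Adj u' u) (w : V) :
    Burnable G (k + 1) := by
  obtain ⟨v, hv⟩ := h
  refine ⟨Fin.snoc (fun i => (v i).1) w, fun u => ?_⟩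
  obtain ⟨x, hxs, hxu, hdxu⟩ : ∃ x ∈ s, G.Reachable x u ∧ G.dist x u ≤ 1 := by
    by_cases hu : u ∈ s
    · exact ⟨u, hu, Reachable.refl u, by simp⟩
    · obtain ⟨u', hu's, hadj⟩ := hs u hu
      exact ⟨u', hu's, hadj.reachable, (dist_eq_one_iff_adj.2 hadj).le⟩
  obtain ⟨i, hreach, hdist⟩ := hv ⟨x, hxs⟩
  have hreach' : G.Reachable (v i) x := hreach.map (Embedding.induce s).toHom
  have hdist' : G.dist (v i) x ≤ (G.induce s).dist (v i) ⟨x, hxs⟩ :=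
    hreach.dist_map_le_s14 (Embedding.induce s).toHom
  refine ⟨i.castSucc, ?_, ?_⟩
  · simpa only [Fin.snoc_castSucc] using hreach'.trans hxu
  · simp only [Fin.snoc_castSucc, Fin.val_castSucc]
    have := hxu.dist_triangle_right (v i : V)
    have := i.isLt
    omega

theorem burning_delete_leaves {V : Type*} [Fintype V] (T : SimpleGraph V)
    [DecidableRel T.Adj] (hT : T.IsTree) (hnl : ∃ v : V, T.degree v ≠ 1) :
    burningNumber T ≤ burningNumber (T.induce {v : V | T.degree v ≠ 1}) + 1 := by
  obtain ⟨w, hw⟩ := hnl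
  refine Nat.sInf_le ((burnable_burningNumber _).succ_of_induce (fun u hu => ?_) w)
  obtain ⟨u', hadj, hu'⟩ := hT.connected.exists_adj_degree_ne_one ⟨w, hw⟩ (not_not.1 hu)
  exact ⟨u', hu', hadj.symm⟩
end
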